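/- Consider the distributed iteration x_i^{t+1} = x_i^t − β_t ∑_{j∈Ω_i} Ψ(x_i^t − x_j^t + ξ_{ij}^t) − α_t ∇f_i(x_i^t) with α_t = a/(t+1) and β_t = b/(t+1)^δ, where a, b > 0, δ ∈ (1/2, 1), the vectors ξ_{ij}^t ∈ ℝ^M are arbitrary (no probabilistic assumption), and |Ψ(u)| ≤ c₁ for all u ∈ ℝ for some c₁ > 0. Then there exist constants c', c'' > 0 such that for all t ≥ 1, the stacked iterate x^t = (x_1^t, …, x_N^t) ∈ ℝ^{NM} satisfies ‖x^t − 1_N ⊗ x*‖ ≤ c' + c'' t^{1−δ}, where x* is the unique minimizer of ∑_{i=1}^N f_i. In particular the bound holds surely, for every realization of the noise. -/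

import Mathlib

open Filter

/-- The componentwise application of a scalar nonlinearity `Ψ : ℝ → ℝ`
to a vector in `ℝ^M`. -/
noncomputable def compPsi (M : ℕ) (Ψ : ℝ → ℝ) (v : EuclideanSpace ℝ (Fin M)) :
    EuclideanSpace ℝ (Fin M) :=
  (WithLp.equiv 2 (Fin M → ℝ)).symm (fun k => Ψ ((WithLp.equiv 2 (Fin M → ℝ)) v k))

/-! Each agent's error `‖x_i^t - x*‖` is controlled on its own. Whatever the noise, the
consensus term has norm at most `deg i * √M * c₁`. By strong convexity and `L`-smoothness the
gradient step `p ↦ p - α ∇f_i p` is nonexpansive as soon as `α L² ≤ 2μ`, which holds for all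
`t ≥ ⌈a L² / (2μ)⌉`, and is `(1 + αL)`-Lipschitz before. So the error obeys
`r(t+1) ≤ (1 + c_t) r(t) + D_i / (t+1)^δ` with `c_t` vanishing after finitely many steps, and the
discrete Grönwall inequality together with `∑_{s<t} (s+1)^(-δ) ≤ t^(1-δ) / (1-δ)` gives the growth
`t^(1-δ)`. -/

open Finset InnerProductSpace

section GradientStep

variable {E : Type*} [NormedAddCommGroup E] [InnerProductSpace ℝ E]

lemma ContinuousLinearMap.opNorm_le_of_inner_map_self_le {T : E →L[ℝ] E}
    (hT : (T : E →ₗ[ℝ] E).IsSymmetric) {L : ℝ} (hL : 0 ≤ L)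
    (h : ∀ v, |⟪T v, v⟫_ℝ| ≤ L * ‖v‖ ^ 2) : ‖T‖ ≤ L := by
  rw [T.norm_eq_iSup_rayleighQuotient hT]
  refine ciSup_le fun v => ?_
  rcases eq_or_ne v 0 with rfl | hv
  · simpa using hL
  rw [rayleighQuotient, reApplyInnerSelf_apply, abs_div, abs_sq, div_le_iff₀ (by positivity)]
  exact h v

lemma ContinuousLinearMap.norm_id_sub_smul_le_one {T : E →L[ℝ] E} {μ L α : ℝ} (hT : ‖T‖ ≤ L)
    (hμ : ∀ v, μ * ‖v‖ ^ 2 ≤ ⟪v, T v⟫_ℝ) (hα : 0 ≤ α) (hαL : α * L ^ 2 ≤ 2 * μ) :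
    ‖ContinuousLinearMap.id ℝ E - α • T‖ ≤ 1 := by
  refine ContinuousLinearMap.opNorm_le_bound _ zero_le_one fun v => ?_
  have hTv : ‖T v‖ ^ 2 ≤ L ^ 2 * ‖v‖ ^ 2 := by
    rw [← mul_pow]
    exact pow_le_pow_left₀ (norm_nonneg _) (T.le_of_opNorm_le hT v) 2
  have hsq : ‖v - α • T v‖ ^ 2 ≤ ‖v‖ ^ 2 := by
    rw [norm_sub_sq_real, real_inner_smul_right, norm_smul, mul_pow, Real.norm_eq_abs, sq_abs]
    have hα2 : α * (α * L ^ 2 * ‖v‖ ^ 2) ≤ α * (2 * μ * ‖v‖ ^ 2) :=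
      mul_le_mul_of_nonneg_left (mul_le_mul_of_nonneg_right hαL (sq_nonneg _)) hα
    nlinarith [mul_le_mul_of_nonneg_left (hμ v) hα, mul_le_mul_of_nonneg_left hTv (sq_nonneg α)]
  rw [one_mul]
  exact (pow_le_pow_iff_left₀ (norm_nonneg _) (norm_nonneg _) two_ne_zero).1 hsq

/-- `1 + gradientStepExcess μ L α` bounds the Lipschitz constant of `p ↦ p - α • ∇g p` for `g`
with `μ ≤ ∇²g ≤ L`. -/
noncomputable def gradientStepExcess (μ L α : ℝ) : ℝ := if α * L ^ 2 ≤ 2 * μ then 0 else α * L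

lemma gradientStepExcess_nonneg_and_le {μ L α a : ℝ} (hL : 0 ≤ L) (hα : 0 ≤ α) (hαa : α ≤ a) :
    0 ≤ gradientStepExcess μ L α ∧ gradientStepExcess μ L α ≤ a * L := by
  unfold gradientStepExcess
  split_ifs
  exacts [⟨le_rfl, mul_nonneg (hα.trans hαa) hL⟩, ⟨by positivity, by gcongr⟩]

variable [CompleteSpace E] {g : E → ℝ} {μ L α : ℝ}

-- Over `ℝ` the conjugate-linear Riesz map `toDual` is linear, so it is read as an `≃ₗᵢ[ℝ]`.
lemma ContDiff.differentiable_gradient (hg : ContDiff ℝ 2 g) : Differentiable ℝ (gradient g) :=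
  (((toDual ℝ E).symm : StrongDual ℝ E ≃ₗᵢ[ℝ] E).contDiff.comp
    (hg.fderiv_right (m := 1) (by norm_num))).differentiable one_ne_zero

lemma inner_fderiv_gradient_apply (x u v : E) :
    ⟪u, fderiv ℝ (gradient g) x v⟫_ℝ = fderiv ℝ (fderiv ℝ g) x v u := by
  have hJ : gradient g = ((toDual ℝ E).symm : StrongDual ℝ E ≃ₗᵢ[ℝ] E) ∘ fderiv ℝ g := rfl
  rw [hJ, LinearIsometryEquiv.comp_fderiv, real_inner_comm]
  exact toDual_symm_apply

lemma ContDiff.isSymmetric_fderiv_gradient (hg : ContDiff ℝ 2 g) (x : E) :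
    (fderiv ℝ (gradient g) x : E →ₗ[ℝ] E).IsSymmetric := fun u v => by
  have hsymm := hg.contDiffAt.isSymmSndFDerivAt (x := x) (by simp)
  simp only [ContinuousLinearMap.coe_coe]
  rw [real_inner_comm, inner_fderiv_gradient_apply, inner_fderiv_gradient_apply, hsymm]

lemma norm_gradient_step_sub_le (hg : ContDiff ℝ 2 g)
    (hH : ∀ x v : E, μ * ‖v‖ ^ 2 ≤ ⟪v, fderiv ℝ (gradient g) x v⟫_ℝ ∧
      ⟪v, fderiv ℝ (gradient g) x v⟫_ℝ ≤ L * ‖v‖ ^ 2)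
    (hμ : 0 ≤ μ) (hL : 0 ≤ L) (hα : 0 ≤ α) (p q : E) :
    ‖(p - α • gradient g p) - (q - α • gradient g q)‖ ≤
      (1 + gradientStepExcess μ L α) * ‖p - q‖ := by
  have hderiv : ∀ z, HasFDerivAt (fun w => w - α • gradient g w)
      (ContinuousLinearMap.id ℝ E - α • fderiv ℝ (gradient g) z) z := fun z =>
    (hasFDerivAt_id z).sub ((hg.differentiable_gradient z).hasFDerivAt.const_smul α)
  have hHess : ∀ z, ‖fderiv ℝ (gradient g) z‖ ≤ L := fun z =>
    ContinuousLinearMap.opNorm_le_of_inner_map_self_le (hg.isSymmetric_fderiv_gradient z) hL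
      fun v => by
        rw [real_inner_comm, abs_le]
        constructor <;> nlinarith [hH z v, sq_nonneg ‖v‖]
  have hbound : ∀ z, ‖ContinuousLinearMap.id ℝ E - α • fderiv ℝ (gradient g) z‖ ≤
      1 + gradientStepExcess μ L α := by
    intro z
    unfold gradientStepExcess
    split_ifs with hαL
    · simpa using (fderiv ℝ (gradient g) z).norm_id_sub_smul_le_one (hHess z)
        (fun v => (hH z v).1) hα hαL
    · calc _ ≤ ‖ContinuousLinearMap.id ℝ E‖ + ‖α • fderiv ℝ (gradient g) z‖ := norm_sub_le _ _
        _ ≤ 1 + α * L := by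
          rw [norm_smul, Real.norm_of_nonneg hα]
          gcongr
          exacts [ContinuousLinearMap.norm_id_le, hHess z]
  simpa using Convex.norm_image_sub_le_of_norm_fderiv_le
    (fun z _ => (hderiv z).differentiableAt) (fun z _ => (hderiv z).fderiv ▸ hbound z)
    convex_univ (Set.mem_univ q) (Set.mem_univ p)

lemma norm_perturbed_gradient_step_sub_le (hg : ContDiff ℝ 2 g)
    (hH : ∀ x v : E, μ * ‖v‖ ^ 2 ≤ ⟪v, fderiv ℝ (gradient g) x v⟫_ℝ ∧
      ⟪v, fderiv ℝ (gradient g) x v⟫_ℝ ≤ L * ‖v‖ ^ 2)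
    (hμ : 0 ≤ μ) (hL : 0 ≤ L) (hα : 0 ≤ α) {β : ℝ} (hβ : 0 ≤ β) (p q S : E) :
    ‖p - β • S - α • gradient g p - q‖ ≤
      (1 + gradientStepExcess μ L α) * ‖p - q‖ +
        α * ‖gradient g q‖ + β * ‖S‖ := by
  have hsplit : p - β • S - α • gradient g p - q =
      (p - α • gradient g p) - (q - α • gradient g q) - α • gradient g q - β • S := by abel
  rw [hsplit]
  grw [norm_sub_le, norm_sub_le, norm_gradient_step_sub_le hg hH hμ hL hα, norm_smul, norm_smul,
    Real.norm_of_nonneg hα, Real.norm_of_nonneg hβ]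

end GradientStep

lemma sub_one_rpow_le {y δ : ℝ} (hy : 1 ≤ y) (hδ0 : 0 ≤ δ) (hδ1 : δ ≤ 1) :
    (y - 1) ^ (1 - δ) ≤ y ^ (1 - δ) - (1 - δ) / y ^ δ := by
  have hy0 : 0 < y := by linarith
  have hinv : 1 / y ≤ 1 := div_le_one_of_le₀ hy hy0.le
  have hbern := rpow_one_add_le_one_add_mul_self (s := -(1 / y)) (p := 1 - δ)
    (neg_le_neg hinv) (by linarith) (by linarith)
  have hpow : y ^ (1 - δ) / y = 1 / y ^ δ := by
    rw [Real.rpow_sub hy0, Real.rpow_one]; field_simp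
  calc (y - 1) ^ (1 - δ) = y ^ (1 - δ) * (1 + -(1 / y)) ^ (1 - δ) := by
        rw [← Real.mul_rpow hy0.le (by linarith)]; congr 1; field_simp; ring
    _ ≤ y ^ (1 - δ) * (1 + (1 - δ) * -(1 / y)) := by gcongr
    _ = y ^ (1 - δ) - (1 - δ) / y ^ δ := by rw [div_eq_mul_one_div _ (y ^ δ), ← hpow]; ring

lemma sum_range_one_div_rpow_le {δ : ℝ} (hδ0 : 0 ≤ δ) (hδ1 : δ < 1) (t : ℕ) :
    ∑ s ∈ range t, 1 / ((s : ℝ) + 1) ^ δ ≤ (t : ℝ) ^ (1 - δ) / (1 - δ) := by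
  have hδ : 0 < 1 - δ := by linarith
  calc ∑ s ∈ range t, 1 / ((s : ℝ) + 1) ^ δ
      ≤ ∑ s ∈ range t, (((s + 1 : ℕ) : ℝ) ^ (1 - δ) - (s : ℝ) ^ (1 - δ)) / (1 - δ) := by
        refine sum_le_sum fun s _ => ?_
        rw [le_div_iff₀ hδ, one_div_mul_eq_div]
        have := sub_one_rpow_le (y := (s : ℝ) + 1) (by simp) hδ0 hδ1.le
        push_cast
        simp only [add_sub_cancel_right] at this
        linarith
    _ = (t : ℝ) ^ (1 - δ) / (1 - δ) := by
        rw [← sum_div, sum_range_sub (fun s : ℕ => (s : ℝ) ^ (1 - δ)), Nat.cast_zero,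
          Real.zero_rpow hδ.ne', sub_zero]

lemma sum_range_le_mul_of_eventually_zero {c : ℕ → ℝ} {C : ℝ} {t₀ : ℕ}
    (hc : ∀ t, 0 ≤ c t ∧ c t ≤ C) (hc₀ : ∀ t, t₀ ≤ t → c t = 0) (n : ℕ) :
    ∑ t ∈ range n, c t ≤ t₀ * C := by
  calc ∑ t ∈ range n, c t = ∑ t ∈ range n with t < t₀, c t :=
        (sum_filter_of_ne fun t _ h => not_le.1 (mt (hc₀ t) h)).symm
    _ ≤ ∑ t ∈ range t₀, c t :=
        sum_le_sum_of_subset_of_nonneg (fun t ht => by simp_all)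
          (fun t _ _ => (hc t).1)
    _ ≤ t₀ * C := by
        simpa using sum_le_card_nsmul (range t₀) c C fun t _ => (hc t).2

lemma le_mul_exp_of_eventually_nonexpansive {r c : ℕ → ℝ} {C D δ : ℝ} {t₀ : ℕ}
    (hδ0 : 0 ≤ δ) (hδ1 : δ < 1) (hD : 0 ≤ D) (hr0 : 0 ≤ r 0)
    (hc : ∀ t, 0 ≤ c t ∧ c t ≤ C) (hc₀ : ∀ t, t₀ ≤ t → c t = 0)
    (hr : ∀ t, r (t + 1) ≤ (1 + c t) * r t + D / ((t : ℝ) + 1) ^ δ) (t : ℕ) :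
    r t ≤ (r 0 + D / (1 - δ) * (t : ℝ) ^ (1 - δ)) * Real.exp (t₀ * C) := by
  have hsum : ∑ s ∈ range t, D / ((s : ℝ) + 1) ^ δ ≤ D / (1 - δ) * (t : ℝ) ^ (1 - δ) := by
    calc ∑ s ∈ range t, D / ((s : ℝ) + 1) ^ δ = D * ∑ s ∈ range t, 1 / ((s : ℝ) + 1) ^ δ := by
          simp only [mul_sum, mul_one_div]
      _ ≤ D * ((t : ℝ) ^ (1 - δ) / (1 - δ)) := by grw [sum_range_one_div_rpow_le hδ0 hδ1]
      _ = D / (1 - δ) * (t : ℝ) ^ (1 - δ) := by ring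
  have hgron := discrete_gronwall (n₀ := 0) hr0 (fun t _ => hr t) (fun t _ => (hc t).1)
    (fun t _ => by positivity) (Nat.zero_le t)
  rw [← range_eq_Ico] at hgron
  have hδ : 0 < 1 - δ := sub_pos.2 hδ1
  grw [hgron, hsum, sum_range_le_mul_of_eventually_zero hc hc₀]

lemma sqrt_sum_sq_le_sum {ι : Type*} (s : Finset ι) {u : ι → ℝ} (hu : ∀ i ∈ s, 0 ≤ u i) :
    √(∑ i ∈ s, u i ^ 2) ≤ ∑ i ∈ s, u i :=
  Real.sqrt_le_iff.2 ⟨sum_nonneg hu, sum_sq_le_sq_sum_of_nonneg hu⟩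

lemma exists_pos_sqrt_sum_sq_le {ι α : Type*} [Fintype ι] {r : α → ι → ℝ} {s : α → ℝ}
    {A B : ι → ℝ} (hr : ∀ t i, 0 ≤ r t i) (hs : ∀ t, 0 ≤ s t)
    (h : ∀ t i, r t i ≤ A i + B i * s t) :
    ∃ c' c'' : ℝ, 0 < c' ∧ 0 < c'' ∧ ∀ t, √(∑ i, r t i ^ 2) ≤ c' + c'' * s t := by
  refine ⟨|∑ i, A i| + 1, |∑ i, B i| + 1, by positivity, by positivity, fun t => ?_⟩
  calc √(∑ i, r t i ^ 2) ≤ ∑ i, r t i := sqrt_sum_sq_le_sum _ fun i _ => hr t i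
    _ ≤ ∑ i, A i + (∑ i, B i) * s t := by
        rw [sum_mul, ← sum_add_distrib]; exact sum_le_sum fun i _ => h t i
    _ ≤ |∑ i, A i| + 1 + (|∑ i, B i| + 1) * s t := by
        gcongr
        · linarith [le_abs_self (∑ i, A i)]
        · exact hs t
        · linarith [le_abs_self (∑ i, B i)]

lemma stepsize_mul_sq_le_of_ceil_le {a L μ : ℝ} (hμ : 0 < μ) {t : ℕ}
    (ht : ⌈a * L ^ 2 / (2 * μ)⌉₊ ≤ t) : a / ((t : ℝ) + 1) * L ^ 2 ≤ 2 * μ := by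
  have h : a * L ^ 2 / (2 * μ) ≤ t := (Nat.le_ceil _).trans (Nat.cast_le.2 ht)
  rw [div_le_iff₀ (by positivity)] at h
  rw [div_mul_eq_mul_div, div_le_iff₀ (by positivity)]
  nlinarith

lemma div_le_div_rpow {a δ : ℝ} (ha : 0 ≤ a) (hδ1 : δ ≤ 1) (t : ℕ) :
    a / ((t : ℝ) + 1) ≤ a / ((t : ℝ) + 1) ^ δ := by
  have ht : (1 : ℝ) ≤ t + 1 := by simp
  exact div_le_div_of_nonneg_left ha (by positivity)
    (by simpa using Real.rpow_le_rpow_of_exponent_le ht hδ1)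

lemma norm_compPsi_le {M : ℕ} {Ψ : ℝ → ℝ} {c₁ : ℝ} (hΨ : ∀ u, |Ψ u| ≤ c₁)
    (v : EuclideanSpace ℝ (Fin M)) : ‖compPsi M Ψ v‖ ≤ √M * c₁ := by
  have hc₁ : 0 ≤ c₁ := (abs_nonneg _).trans (hΨ 0)
  have hsq : ∀ k, ‖compPsi M Ψ v k‖ ^ 2 ≤ c₁ ^ 2 := fun k => by
    simpa [compPsi, sq_abs] using pow_le_pow_left₀ (abs_nonneg _) (hΨ (v k)) 2
  rw [EuclideanSpace.norm_eq, ← Real.sqrt_sq hc₁, ← Real.sqrt_mul (Nat.cast_nonneg M)]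
  gcongr
  simpa using sum_le_card_nsmul univ _ _ fun k _ => hsq k

lemma norm_sum_compPsi_le {ι : Type*} {M : ℕ} {Ψ : ℝ → ℝ} {c₁ : ℝ} (hΨ : ∀ u, |Ψ u| ≤ c₁)
    (s : Finset ι) (v : ι → EuclideanSpace ℝ (Fin M)) :
    ‖∑ j ∈ s, compPsi M Ψ (v j)‖ ≤ #s * (√M * c₁) := by
  simpa using norm_sum_le_of_le s fun j _ => norm_compPsi_le hΨ (v j)

theorem iterates_bounded_surely_general (N M : ℕ)
    (G : SimpleGraph (Fin N)) [DecidableRel G.Adj]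
    (f : Fin N → EuclideanSpace ℝ (Fin M) → ℝ)
    (μ L : ℝ) (hμ : 0 < μ) (hμL : μ ≤ L)
    (hf : ∀ i, ContDiff ℝ 2 (f i))
    (hHess : ∀ (i : Fin N) (x v : EuclideanSpace ℝ (Fin M)),
      μ * ‖v‖ ^ 2 ≤ (inner ℝ v (fderiv ℝ (gradient (f i)) x v) : ℝ) ∧
      (inner ℝ v (fderiv ℝ (gradient (f i)) x v) : ℝ) ≤ L * ‖v‖ ^ 2)
    (xstar : EuclideanSpace ℝ (Fin M))
    (Ψ : ℝ → ℝ) (c₁ : ℝ) (hΨ_bdd : ∀ u : ℝ, |Ψ u| ≤ c₁)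
    (a b δ : ℝ) (ha : 0 < a) (hb : 0 < b) (hδ : 1 / 2 < δ) (hδ1 : δ < 1)
    (ξ : ℕ → Fin N → Fin N → EuclideanSpace ℝ (Fin M))
    (x : ℕ → Fin N → EuclideanSpace ℝ (Fin M))
    (hx : ∀ (t : ℕ) (i : Fin N),
      x (t + 1) i = x t i
        - (b / ((t : ℝ) + 1) ^ δ) •
            (∑ j ∈ G.neighborFinset i, compPsi M Ψ (x t i - x t j + ξ t i j))
        - (a / ((t : ℝ) + 1)) • gradient (f i) (x t i)) :
    ∃ c' c'' : ℝ, 0 < c' ∧ 0 < c'' ∧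
      ∀ t : ℕ, 1 ≤ t →
        Real.sqrt (∑ i, ‖x t i - xstar‖ ^ 2) ≤ c' + c'' * (t : ℝ) ^ (1 - δ) := by
  have hL : 0 ≤ L := hμ.le.trans hμL
  have hδ0 : 0 ≤ δ := by linarith
  have hc₁ : 0 ≤ c₁ := (abs_nonneg _).trans (hΨ_bdd 0)
  set c : ℕ → ℝ := fun t => gradientStepExcess μ L (a / ((t : ℝ) + 1))
  have hc : ∀ t, 0 ≤ c t ∧ c t ≤ a * L := fun t =>
    gradientStepExcess_nonneg_and_le hL (by positivity) (div_le_self ha.le (by simp))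
  have hc₀ : ∀ t, ⌈a * L ^ 2 / (2 * μ)⌉₊ ≤ t → c t = 0 := fun t ht =>
    if_pos (stepsize_mul_sq_le_of_ceil_le hμ ht)
  set D : Fin N → ℝ := fun i => a * ‖gradient (f i) xstar‖ + b * (G.degree i * (√M * c₁))
  have hrec : ∀ i t, ‖x (t + 1) i - xstar‖ ≤
      (1 + c t) * ‖x t i - xstar‖ + D i / ((t : ℝ) + 1) ^ δ := fun i t => by
    rw [hx]
    grw [norm_perturbed_gradient_step_sub_le (hf i) (hHess i) hμ.le hL (by positivity)
      (by positivity), norm_sum_compPsi_le hΨ_bdd, div_le_div_rpow ha.le hδ1.le]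
    exact le_of_eq (by simp only [D, c, SimpleGraph.card_neighborFinset_eq_degree]; ring)
  set K := Real.exp (⌈a * L ^ 2 / (2 * μ)⌉₊ * (a * L))
  obtain ⟨c', c'', hc', hc'', hbound⟩ := exists_pos_sqrt_sum_sq_le
    (r := fun t i => ‖x t i - xstar‖) (s := fun t : ℕ => (t : ℝ) ^ (1 - δ))
    (A := fun i => ‖x 0 i - xstar‖ * K) (B := fun i => D i / (1 - δ) * K)
    (fun t i => norm_nonneg _) (fun t => by positivity) fun t i =>
      (le_mul_exp_of_eventually_nonexpansive (r := fun t => ‖x t i - xstar‖) hδ0 hδ1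
        (by positivity : 0 ≤ D i) (norm_nonneg _) hc hc₀ (hrec i) t).trans_eq (by ring)
  exact ⟨c', c'', hc', hc'', fun t _ => hbound t⟩

/-- Deterministic (per-realization) boundedness of the iterates of the
distributed algorithm: for arbitrary noise realizations `ξ`, the stacked
iterate satisfies `‖x^t − 1_N ⊗ x*‖ ≤ c' + c'' t^{1−δ}` for all `t ≥ 1`. -/
theorem iterates_bounded_surely (N M : ℕ) (hN : 0 < N)
    (G : SimpleGraph (Fin N)) [DecidableRel G.Adj] (hGconn : G.Connected)
    (f : Fin N → EuclideanSpace ℝ (Fin M) → ℝ)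
    (μ L : ℝ) (hμ : 0 < μ) (hμL : μ ≤ L)
    (hf : ∀ i, ContDiff ℝ 2 (f i))
    (hHess : ∀ (i : Fin N) (x v : EuclideanSpace ℝ (Fin M)),
      μ * ‖v‖ ^ 2 ≤ (inner ℝ v (fderiv ℝ (gradient (f i)) x v) : ℝ) ∧
      (inner ℝ v (fderiv ℝ (gradient (f i)) x v) : ℝ) ≤ L * ‖v‖ ^ 2)
    (xstar : EuclideanSpace ℝ (Fin M))
    (hxstar : ∀ y, ∑ i, f i xstar ≤ ∑ i, f i y)
    (Ψ : ℝ → ℝ) (c₁ : ℝ) (hc₁ : 0 < c₁) (hΨ_bdd : ∀ u : ℝ, |Ψ u| ≤ c₁)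
    (a b δ : ℝ) (ha : 0 < a) (hb : 0 < b) (hδ : 1 / 2 < δ) (hδ1 : δ < 1)
    (ξ : ℕ → Fin N → Fin N → EuclideanSpace ℝ (Fin M))
    (x : ℕ → Fin N → EuclideanSpace ℝ (Fin M))
    (hx : ∀ (t : ℕ) (i : Fin N),
      x (t + 1) i = x t i
        - (b / ((t : ℝ) + 1) ^ δ) •
            (∑ j ∈ G.neighborFinset i, compPsi M Ψ (x t i - x t j + ξ t i j))
        - (a / ((t : ℝ) + 1)) • gradient (f i) (x t i)) :
    ∃ c' c'' : ℝ, 0 < c' ∧ 0 < c'' ∧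
      ∀ t : ℕ, 1 ≤ t →
        Real.sqrt (∑ i, ‖x t i - xstar‖ ^ 2) ≤ c' + c'' * (t : ℝ) ^ (1 - δ) :=
  iterates_bounded_surely_general N M G f μ L hμ hμL hf hHess xstar Ψ c₁ hΨ_bdd a b δ ha hb hδ hδ1 ξ
    x hx
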